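/- arXiv:1801.04706 — 7 statements merged into one kernel-verified Lean document; each statement's English description precedes it below -/
import Mathlib

section
/- Let (Ω, 𝒜, μ) be a finite measure space, P a finite index set, and {A_p}_{p∈P} a family of measurable sets. Let (B_1,B*_1),…,(B_k,B*_k) be pairs of subsets of P such that B_i ∩ B*_i = ∅ and ⋂_{p∈B_i} A_p ⊆ ⋃_{p∈B*_i} A_p for every i ∈ {1,…,k}. Then μ(⋂_{p∈P} Ω∖A_p) = Σ_{I ∈ 2^P ∖ 𝔅} (−1)^{|I|} μ(⋂_{i∈I} A_i). -/
open MeasureTheory Finset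

lemma ie_aux {Ω : Type*} [MeasurableSpace Ω] (μ : Measure Ω) [IsFiniteMeasure μ]
    {P : Type*} [DecidableEq P] (A : P → Set Ω) (hA : ∀ p, MeasurableSet (A p))
    (S : Finset P) : ∀ T : Set Ω,
    (μ (T ∩ ⋂ p ∈ S, (A p)ᶜ)).toReal =
      ∑ K ∈ S.powerset, (-1:ℝ)^K.card * (μ (T ∩ ⋂ p ∈ K, A p)).toReal := by
  induction S using Finset.induction_on with
  | empty => intro T; simp
  | @insert a S ha ih =>
    intro T
    have key : ∀ X : Set Ω, (μ (X ∩ (A a)ᶜ)).toReal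
        = (μ X).toReal - (μ (X ∩ A a)).toReal := by
      intro X
      have h := measure_inter_add_diff (μ := μ) X (hA a)
      rw [Set.diff_eq] at h
      have h1 : μ (X ∩ A a) ≠ ⊤ := measure_ne_top μ _
      have h2 : μ (X ∩ (A a)ᶜ) ≠ ⊤ := measure_ne_top μ _
      have h3 := congrArg ENNReal.toReal h
      rw [ENNReal.toReal_add h1 h2] at h3
      linarith
    rw [Finset.sum_powerset_insert ha]
    have hT : T ∩ ⋂ p ∈ insert a S, (A p)ᶜ = (T ∩ (A a)ᶜ) ∩ ⋂ p ∈ S, (A p)ᶜ := by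
      rw [Finset.set_biInter_insert]
      ext x; simp only [Set.mem_inter_iff]; tauto
    rw [hT, ih, ← Finset.sum_add_distrib]
    refine Finset.sum_congr rfl fun K hK => ?_
    have haK : a ∉ K := fun h => ha (Finset.mem_powerset.mp hK h)
    rw [Finset.card_insert_of_notMem haK, Finset.set_biInter_insert]
    have e1 : (T ∩ (A a)ᶜ) ∩ ⋂ p ∈ K, A p = (T ∩ ⋂ p ∈ K, A p) ∩ (A a)ᶜ := by
      ext x; simp only [Set.mem_inter_iff]; tauto
    have e2 : T ∩ (A a ∩ ⋂ p ∈ K, A p) = (T ∩ ⋂ p ∈ K, A p) ∩ A a := by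
      ext x; simp only [Set.mem_inter_iff]; tauto
    rw [e1, key, e2]
    ring

/-- ordering-free inclusion-exclusion, Theorem 2 of the paper.
`𝔅_i = {I ⊆ P : B_i ⊆ I ∧ ∀ j < i, B_j \ B*_i ⊄ I}`, `𝔅 = ⋃ᵢ 𝔅_i`, and the
inclusion-exclusion sum can be restricted to `2^P \ 𝔅`. -/
theorem stmt_0 {Ω : Type*} [MeasurableSpace Ω] (μ : Measure Ω) [IsFiniteMeasure μ]
    {P : Type*} [Fintype P] [DecidableEq P]
    (A : P → Set Ω) (hA : ∀ p, MeasurableSet (A p))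
    {k : ℕ} (B Bstar : Fin k → Finset P)
    (hdisj : ∀ i, Disjoint (B i) (Bstar i))
    (hsub : ∀ i, (⋂ p ∈ B i, A p) ⊆ ⋃ p ∈ Bstar i, A p) :
    (μ (⋂ p : P, (A p)ᶜ)).toReal =
      ∑ I ∈ (Finset.univ : Finset P).powerset.filter
          (fun I => ¬ ∃ i : Fin k, B i ⊆ I ∧ ∀ j : Fin k, j < i → ¬ B j \ Bstar i ⊆ I),
        (-1 : ℝ) ^ I.card * (μ (⋂ p ∈ I, A p)).toReal := by
  classical
  set f : Finset P → ℝ := fun I => (-1:ℝ)^I.card * (μ (⋂ p ∈ I, A p)).toReal with hf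
  set pred : Finset P → Prop :=
    fun I => ∃ i : Fin k, B i ⊆ I ∧ ∀ j : Fin k, j < i → ¬ B j \ Bstar i ⊆ I with hpred
  set predi : Fin k → Finset P → Prop :=
    fun i I => B i ⊆ I ∧ ∀ j : Fin k, j < i → ¬ B j \ Bstar i ⊆ I with hpredi
  -- base inclusion-exclusion
  have base : (μ (⋂ p : P, (A p)ᶜ)).toReal = ∑ I ∈ (univ : Finset P).powerset, f I := by
    have h := ie_aux μ A hA (univ : Finset P) Set.univ
    simpa [f] using h
  -- each 𝔅_i sums to zero
  have hzero : ∀ i : Fin k, ∑ I ∈ (univ : Finset P).powerset.filter (predi i), f I = 0 := by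
    intro i
    have hrw : ∑ I ∈ (univ : Finset P).powerset.filter (predi i), f I =
        ∑ x ∈ ((univ : Finset P).powerset.filter (predi i)).filter
            (fun J => Disjoint J (Bstar i)) ×ˢ (Bstar i).powerset,
          f (x.1 ∪ x.2) := by
      refine Finset.sum_nbij' (fun I => (I \ Bstar i, I ∩ Bstar i))
        (fun x => x.1 ∪ x.2) ?_ ?_ ?_ ?_ ?_
      · intro I hI
        rw [Finset.mem_filter] at hI
        obtain ⟨_, hBi, hforall⟩ := hI
        rw [Finset.mem_product, Finset.mem_filter, Finset.mem_filter]
        refine ⟨⟨⟨Finset.mem_powerset.mpr (Finset.subset_univ _), ?_, ?_⟩,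
          Finset.sdiff_disjoint⟩, Finset.mem_powerset.mpr Finset.inter_subset_right⟩
        · exact Finset.subset_sdiff.mpr ⟨hBi, hdisj i⟩
        · intro j hj hsubj
          exact hforall j hj (hsubj.trans (Finset.sdiff_subset))
      · intro x hx
        rw [Finset.mem_product, Finset.mem_filter, Finset.mem_filter] at hx
        obtain ⟨⟨⟨_, hBi, hforall⟩, hdisjJ⟩, hK⟩ := hx
        rw [Finset.mem_filter]
        refine ⟨Finset.mem_powerset.mpr (Finset.subset_univ _),
          hBi.trans Finset.subset_union_left, ?_⟩
        intro j hj hsubj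
        refine hforall j hj fun a ha => ?_
        have ha' := hsubj ha
        rw [Finset.mem_union] at ha'
        rcases ha' with h | h
        · exact h
        · exact absurd (Finset.mem_powerset.mp hK h) (Finset.mem_sdiff.mp ha).2
      · intro I _; exact Finset.sdiff_union_inter I (Bstar i)
      · intro x hx
        rw [Finset.mem_product, Finset.mem_filter, Finset.mem_filter] at hx
        obtain ⟨⟨_, hdisjJ⟩, hK⟩ := hx
        have hK' := Finset.mem_powerset.mp hK
        ext a
        · simp only [Finset.mem_sdiff, Finset.mem_union]
          constructor
          · rintro ⟨h | h, hn⟩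
            · exact h
            · exact absurd (hK' h) hn
          · intro h; exact ⟨Or.inl h, fun hb => (Finset.disjoint_left.mp hdisjJ h) hb⟩
        · simp only [Finset.mem_inter, Finset.mem_union]
          constructor
          · rintro ⟨h | h, hb⟩
            · exact absurd hb (Finset.disjoint_left.mp hdisjJ h)
            · exact h
          · intro h; exact ⟨Or.inr h, hK' h⟩
      · intro I _
        rw [Finset.sdiff_union_inter]
    rw [hrw, Finset.sum_product]
    refine Finset.sum_eq_zero fun J hJ => ?_
    rw [Finset.mem_filter, Finset.mem_filter] at hJ
    obtain ⟨⟨_, hBi, _⟩, hdisjJ⟩ := hJ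
    have hempty : (⋂ p ∈ J, A p) ∩ ⋂ p ∈ (Bstar i : Finset P), (A p)ᶜ = ∅ := by
      ext x
      simp only [Set.mem_inter_iff, Set.mem_iInter, Set.mem_compl_iff, Set.mem_empty_iff_false,
        iff_false, not_and]
      intro hJx hBx
      have hx : x ∈ ⋂ p ∈ B i, A p := by
        simp only [Set.mem_iInter]
        intro p hp
        exact hJx p (hBi hp)
      have := hsub i hx
      simp only [Set.mem_iUnion] at this
      obtain ⟨p, hp, hxp⟩ := this
      exact hBx p hp hxp
    have hinner : ∀ K ∈ (Bstar i).powerset,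
        f (J ∪ K) = (-1:ℝ)^J.card * ((-1:ℝ)^K.card *
          (μ ((⋂ p ∈ J, A p) ∩ ⋂ p ∈ K, A p)).toReal) := by
      intro K hK
      have hK' := Finset.mem_powerset.mp hK
      have hdJK : Disjoint J K := hdisjJ.mono_right hK'
      have hcard : (J ∪ K).card = J.card + K.card := Finset.card_union_of_disjoint hdJK
      have hset : ⋂ p ∈ (J ∪ K : Finset P), A p = (⋂ p ∈ J, A p) ∩ ⋂ p ∈ K, A p := by
        rw [Finset.set_biInter_inter]
      rw [hf]
      simp only [hcard, hset, pow_add]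
      ring
    rw [Finset.sum_congr rfl hinner, ← Finset.mul_sum,
      ← ie_aux μ A hA (Bstar i) (⋂ p ∈ J, A p), hempty]
    simp
  -- 𝔅 = disjoint union of 𝔅_i
  have hBsum : ∑ I ∈ (univ : Finset P).powerset.filter pred, f I = 0 := by
    have hunion : (univ : Finset P).powerset.filter pred =
        (univ : Finset (Fin k)).biUnion
          (fun i => (univ : Finset P).powerset.filter (predi i)) := by
      ext I
      simp only [Finset.mem_filter, Finset.mem_biUnion, Finset.mem_univ, true_and, hpred, hpredi]
      constructor
      · rintro ⟨hI, i, hi⟩; exact ⟨i, hI, hi⟩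
      · rintro ⟨i, hI, hi⟩; exact ⟨hI, i, hi⟩
    rw [hunion, Finset.sum_biUnion, Finset.sum_eq_zero fun i _ => hzero i]
    -- pairwise disjoint
    intro i _ j _ hij
    simp only [Finset.disjoint_left, Finset.mem_filter]
    rintro I ⟨_, hBiI, hforI⟩ ⟨_, hBjI, hforJ⟩
    rcases lt_or_gt_of_ne hij with h | h
    · exact hforJ i h (Finset.sdiff_subset.trans hBiI |>.trans (le_refl _))
    · exact hforI j h (Finset.sdiff_subset.trans hBjI |>.trans (le_refl _))
  have hsplit := Finset.sum_filter_add_sum_filter_not (univ : Finset P).powerset pred f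
  rw [base, ← hsplit, hBsum, zero_add]
end

section
/- Let (Ω, 𝒜, μ) be a finite measure space, P a finite index set, and {A_p}_{p∈P} a family of measurable sets. Let (B_1,B*_1),…,(B_k,B*_k) be pairs of subsets of P such that B_i ∩ B*_i = ∅ and ⋂_{p∈B_i} A_p ⊆ ⋃_{p∈B*_i} A_p for every i ∈ {1,…,k}. Then Σ_{I ∈ 𝔅} (−1)^{|I|} μ(⋂_{i∈I} A_i) = 0. -/
/-!
Integrating indicator functions turns the signed sum into `∫ ω, ∑ (-1)^|I|`, the inner sum
running over those `I ∈ 𝔅` with `I ⊆ N(ω) := {p | ω ∈ A p}`; it suffices that each inner sum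
vanishes. The families `𝔅_i` are pairwise disjoint, so the inner sum splits over `i`. If
`B_i ⊆ N(ω)`, the hypothesis provides some `q ∈ B*_i` with `ω ∈ A q`; as `q ∉ B_i` and `q` lies in
no `B_j ∖ B*_i`, membership in `𝔅_i` does not depend on whether `q ∈ I`, so adding and removing
`q` pairs off the terms of opposite sign.
-/

open MeasureTheory Finset

theorem Finset.sum_filter_exists_of_unique {ι α M : Type*} [Fintype ι] [DecidableEq α]
    [AddCommMonoid M] (s : Finset α) (p : ι → α → Prop) [∀ i, DecidablePred (p i)]
    [DecidablePred fun a => ∃ i, p i a] (hp : ∀ a i j, p i a → p j a → i = j) (f : α → M) :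
    ∑ a ∈ s with ∃ i, p i a, f a = ∑ i, ∑ a ∈ s with p i a, f a := by
  rw [← sum_biUnion]
  · congr 1
    ext a
    simp
  · intro i _ j _ hij
    exact disjoint_filter.mpr fun a _ hi hj => hij (hp a i j hi hj)

theorem Finset.sum_powerset_filter_neg_one_pow_card_eq_zero {α R : Type*} [DecidableEq α]
    [Ring R] {N : Finset α} {q : α} (hq : q ∈ N) (p : Finset α → Prop) [DecidablePred p]
    (hp : ∀ I, q ∉ I → (p (insert q I) ↔ p I)) :
    ∑ I ∈ N.powerset with p I, (-1 : R) ^ I.card = 0 := by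
  rw [sum_filter, ← insert_erase hq, sum_powerset_insert (notMem_erase q N), ← sum_add_distrib]
  refine sum_eq_zero fun I hI => ?_
  have hqI : q ∉ I := fun h => notMem_erase q N (mem_powerset.mp hI h)
  rw [card_insert_of_notMem hqI, pow_succ]
  by_cases h : p I <;> simp [h, hp I hqI]

theorem MeasureTheory.sum_mul_measureReal_eq_integral {Ω ι : Type*} [MeasurableSpace Ω]
    (μ : Measure Ω) [IsFiniteMeasure μ] (S : Finset ι) (s : ι → Set Ω)
    (hs : ∀ i, MeasurableSet (s i)) (c : ι → ℝ) [∀ ω, DecidablePred fun i => ω ∈ s i] :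
    ∑ i ∈ S, c i * μ.real (s i) = ∫ ω, ∑ i ∈ S with ω ∈ s i, c i ∂μ := by
  simp_rw [← integral_indicator_one (hs _), ← integral_const_mul]
  rw [← integral_finsetSum _ fun i _ => ((integrable_const 1).indicator (hs i)).const_mul _]
  congr 1 with ω
  rw [sum_filter]
  refine sum_congr rfl fun i _ => ?_
  by_cases h : ω ∈ s i <;> simp [h]

section Blocks

variable {P : Type*} [DecidableEq P] {k : ℕ} {B Bstar : Fin k → Finset P}

/-- `InBlock B Bstar i I` means `I ∈ 𝔅_i`. -/
def InBlock (B Bstar : Fin k → Finset P) (i : Fin k) (I : Finset P) : Prop :=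
  B i ⊆ I ∧ ∀ j < i, ¬ B j \ Bstar i ⊆ I

instance (i : Fin k) : DecidablePred (InBlock B Bstar i) :=
  fun _ => inferInstanceAs (Decidable (_ ∧ _))

theorem InBlock.unique {I : Finset P} {i j : Fin k} (hi : InBlock B Bstar i I)
    (hj : InBlock B Bstar j I) : i = j := by
  rcases lt_trichotomy i j with hij | hij | hij
  · exact absurd (sdiff_subset.trans hi.1) (hj.2 i hij)
  · exact hij
  · exact absurd (sdiff_subset.trans hj.1) (hi.2 j hij)

theorem inBlock_insert_iff {i : Fin k} {q : P} {I : Finset P} (hq : q ∈ Bstar i)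
    (hqB : q ∉ B i) : InBlock B Bstar i (insert q I) ↔ InBlock B Bstar i I := by
  have hqsdiff : ∀ j, q ∉ B j \ Bstar i := fun j h => (mem_sdiff.mp h).2 hq
  simp only [InBlock, subset_insert_iff_of_notMem hqB, subset_insert_iff_of_notMem (hqsdiff _)]

variable {R : Type*} [Ring R]

theorem sum_powerset_filter_inBlock_neg_one_pow_card {i : Fin k}
    (hdisj : Disjoint (B i) (Bstar i)) {N : Finset P} (hN : B i ⊆ N → ∃ q ∈ Bstar i, q ∈ N) :
    ∑ I ∈ N.powerset with InBlock B Bstar i I, (-1 : R) ^ I.card = 0 := by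
  by_cases hB : B i ⊆ N
  · obtain ⟨q, hq, hqN⟩ := hN hB
    exact sum_powerset_filter_neg_one_pow_card_eq_zero hqN _ fun I _ =>
      inBlock_insert_iff hq (disjoint_right.mp hdisj hq)
  · refine sum_eq_zero fun I hI => absurd ?_ hB
    obtain ⟨hIN, hI⟩ := mem_filter.mp hI
    exact hI.1.trans (mem_powerset.mp hIN)

theorem sum_powerset_filter_exists_inBlock_neg_one_pow_card
    [DecidablePred fun I => ∃ i, InBlock B Bstar i I] (hdisj : ∀ i, Disjoint (B i) (Bstar i))
    {N : Finset P} (hN : ∀ i, B i ⊆ N → ∃ q ∈ Bstar i, q ∈ N) :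
    ∑ I ∈ N.powerset with ∃ i, InBlock B Bstar i I, (-1 : R) ^ I.card = 0 := by
  rw [sum_filter_exists_of_unique _ (InBlock B Bstar) fun _ _ _ => InBlock.unique]
  exact sum_eq_zero fun i _ => sum_powerset_filter_inBlock_neg_one_pow_card (hdisj i) (hN i)

end Blocks

/-- the terms indexed by `𝔅 = ⋃ᵢ 𝔅_i` cancel, i.e. their signed sum is `0`. -/
theorem stmt_1 {Ω : Type*} [MeasurableSpace Ω] (μ : Measure Ω) [IsFiniteMeasure μ]
    {P : Type*} [Fintype P] [DecidableEq P]
    (A : P → Set Ω) (hA : ∀ p, MeasurableSet (A p))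
    {k : ℕ} (B Bstar : Fin k → Finset P)
    (hdisj : ∀ i, Disjoint (B i) (Bstar i))
    (hsub : ∀ i, (⋂ p ∈ B i, A p) ⊆ ⋃ p ∈ Bstar i, A p) :
    ∑ I ∈ (Finset.univ : Finset P).powerset.filter
        (fun I => ∃ i : Fin k, B i ⊆ I ∧ ∀ j : Fin k, j < i → ¬ B j \ Bstar i ⊆ I),
      (-1 : ℝ) ^ I.card * (μ (⋂ p ∈ I, A p)).toReal = 0 := by
  classical
  simp only [← measureReal_def]
  rw [sum_mul_measureReal_eq_integral μ _ _ fun I => I.measurableSet_biInter fun p _ => hA p]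
  refine integral_eq_zero_of_ae (.of_forall fun ω => ?_)
  set N : Finset P := {p | ω ∈ A p} with hN_def
  have hmem (I : Finset P) : ω ∈ ⋂ p ∈ I, A p ↔ I ⊆ N := by
    simp [hN_def, subset_iff]
  have hN (i : Fin k) (hB : B i ⊆ N) : ∃ q ∈ Bstar i, q ∈ N := by
    simpa [hN_def] using hsub i ((hmem _).mpr hB)
  refine (sum_congr ?_ fun _ _ => rfl).trans
    (sum_powerset_filter_exists_inBlock_neg_one_pow_card hdisj hN)
  ext I
  simp only [mem_filter, mem_powerset, subset_univ, true_and, hmem]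
  exact and_comm
end

section
/- Let (Ω, 𝒜, μ) be a finite measure space, P a finite index set, and {A_p}_{p∈P} a family of measurable sets. Let B, B* ⊆ P with B ∩ B* = ∅ and ⋂_{p∈B} A_p ⊆ ⋃_{p∈B*} A_p. Then for every set I* ⊆ P with B ⊆ I* and I* ∩ B* = ∅, one has Σ_{D* ⊆ B*} (−1)^{|I* ∪ D*|} μ(⋂_{p ∈ I* ∪ D*} A_p) = 0. -/
open MeasureTheory Finset

lemma aux_incl_excl {Ω : Type*} [MeasurableSpace Ω] (μ : Measure Ω) [IsFiniteMeasure μ]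
    {P : Type*} [DecidableEq P]
    (A : P → Set Ω) (hA : ∀ p, MeasurableSet (A p)) (T : Finset P) :
    ∀ S : Set Ω, MeasurableSet S →
    ∑ D ∈ T.powerset, (-1 : ℝ) ^ D.card * (μ (S ∩ ⋂ p ∈ D, A p)).toReal
      = (μ (S \ ⋃ p ∈ T, A p)).toReal := by
  induction T using Finset.induction_on with
  | empty => intro S hS; simp
  | @insert a T ha ih =>
    intro S hS
    have hU : MeasurableSet (⋃ p ∈ T, A p) :=
      MeasurableSet.biUnion (T : Set P).to_countable (fun p _ => hA p)
    rw [Finset.powerset_insert, Finset.sum_union, Finset.sum_image]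
    · have h1 := ih S hS
      have h2 := ih (S ∩ A a) (hS.inter (hA a))
      have hrw : ∀ D ∈ T.powerset,
          (-1 : ℝ) ^ (insert a D).card * (μ (S ∩ ⋂ p ∈ insert a D, A p)).toReal
            = -((-1 : ℝ) ^ D.card * (μ ((S ∩ A a) ∩ ⋂ p ∈ D, A p)).toReal) := by
        intro D hD
        have haD : a ∉ D := fun h => ha (Finset.mem_powerset.mp hD h)
        rw [Finset.card_insert_of_notMem haD, pow_succ]
        have hset : S ∩ ⋂ p ∈ insert a D, A p = (S ∩ A a) ∩ ⋂ p ∈ D, A p := by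
          rw [Finset.set_biInter_insert]
          ext x
          simp only [Set.mem_inter_iff]
          tauto
        rw [hset]; ring
      rw [Finset.sum_congr rfl hrw, Finset.sum_neg_distrib, h1, h2]
      have hsplit : S \ ⋃ p ∈ T, A p
          = (S \ ⋃ p ∈ insert a T, A p) ∪ ((S ∩ A a) \ ⋃ p ∈ T, A p) := by
        ext x
        simp only [Set.mem_diff, Set.mem_union, Set.mem_inter_iff, Set.mem_iUnion,
          Finset.mem_insert, exists_prop]
        constructor
        · rintro ⟨hx, hnx⟩
          by_cases hxa : x ∈ A a
          · right; exact ⟨⟨hx, hxa⟩, hnx⟩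
          · left
            refine ⟨hx, ?_⟩
            rintro ⟨p, hp | hp, hxp⟩
            · exact hxa (hp ▸ hxp)
            · exact hnx ⟨p, hp, hxp⟩
        · rintro (⟨hx, hnx⟩ | ⟨⟨hx, _⟩, hnx⟩)
          · exact ⟨hx, fun ⟨p, hp, hxp⟩ => hnx ⟨p, Or.inr hp, hxp⟩⟩
          · exact ⟨hx, hnx⟩
      have hd : Disjoint (S \ ⋃ p ∈ insert a T, A p) ((S ∩ A a) \ ⋃ p ∈ T, A p) := by
        rw [Set.disjoint_left]
        rintro x ⟨_, hnx⟩ ⟨⟨_, hxa⟩, _⟩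
        exact hnx (Set.mem_biUnion (Finset.mem_insert_self a T) hxa)
      have hm : MeasurableSet ((S ∩ A a) \ ⋃ p ∈ T, A p) := (hS.inter (hA a)).diff hU
      rw [hsplit, measure_union hd hm, ENNReal.toReal_add (measure_ne_top μ _) (measure_ne_top μ _)]
      ring
    · intro x hx y hy hxy
      have hax : a ∉ x := fun h => ha (Finset.mem_powerset.mp hx h)
      have hay : a ∉ y := fun h => ha (Finset.mem_powerset.mp hy h)
      rw [← Finset.erase_insert hax, ← Finset.erase_insert hay, hxy]
    · rw [Finset.disjoint_left]
      rintro D hD hD'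
      obtain ⟨E, hE, rfl⟩ := Finset.mem_image.mp hD'
      exact ha (Finset.mem_powerset.mp hD (Finset.mem_insert_self a E))

/-- for a pair `(B, B*)` with `⋂_{p∈B} A_p ⊆ ⋃_{p∈B*} A_p` and any
`I* ⊇ B` disjoint from `B*`, the signed sum over the block `{I* ∪ D* : D* ⊆ B*}`
vanishes. -/
theorem stmt_4 {Ω : Type*} [MeasurableSpace Ω] (μ : Measure Ω) [IsFiniteMeasure μ]
    {P : Type*} [Fintype P] [DecidableEq P]
    (A : P → Set Ω) (hA : ∀ p, MeasurableSet (A p))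
    (B Bstar : Finset P) (hdisj : Disjoint B Bstar)
    (hsub : (⋂ p ∈ B, A p) ⊆ ⋃ p ∈ Bstar, A p)
    (Istar : Finset P) (hBI : B ⊆ Istar) (hIB : Disjoint Istar Bstar) :
    ∑ Dstar ∈ Bstar.powerset,
      (-1 : ℝ) ^ (Istar ∪ Dstar).card * (μ (⋂ p ∈ Istar ∪ Dstar, A p)).toReal = 0 := by
  set S : Set Ω := ⋂ p ∈ Istar, A p with hSdef
  have hS : MeasurableSet S :=
    MeasurableSet.biInter (Istar : Set P).to_countable (fun p _ => hA p)
  have key := aux_incl_excl μ A hA Bstar S hS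
  have hrw : ∀ D ∈ Bstar.powerset,
      (-1 : ℝ) ^ (Istar ∪ D).card * (μ (⋂ p ∈ Istar ∪ D, A p)).toReal
        = (-1 : ℝ) ^ Istar.card * ((-1 : ℝ) ^ D.card * (μ (S ∩ ⋂ p ∈ D, A p)).toReal) := by
    intro D hD
    have hdD : Disjoint Istar D :=
      hIB.mono_right (Finset.mem_powerset.mp hD)
    rw [Finset.card_union_of_disjoint hdD, pow_add]
    have hset : (⋂ p ∈ Istar ∪ D, A p) = S ∩ ⋂ p ∈ D, A p := by
      ext x
      simp only [hSdef, Set.mem_inter_iff, Set.mem_iInter, Finset.mem_union]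
      constructor
      · intro h; exact ⟨fun p hp => h p (Or.inl hp), fun p hp => h p (Or.inr hp)⟩
      · rintro ⟨h1, h2⟩ p (hp | hp)
        · exact h1 p hp
        · exact h2 p hp
    rw [hset]; ring
  rw [Finset.sum_congr rfl hrw, ← Finset.mul_sum, key]
  have hempty : S \ ⋃ p ∈ Bstar, A p = ∅ := by
    rw [Set.diff_eq_empty]
    intro x hx
    apply hsub
    simp only [hSdef, Set.mem_iInter] at hx ⊢
    exact fun p hp => hx p (hBI hp)
  rw [hempty]
  simp
end

section
/- Let P be a finite linearly ordered set and let B_1, B_2, …, B_k be subsets of P, each having a nonempty set of strict upper bounds. For each i set B'_i = {p ∈ P : p > b for every b ∈ B_i} and let b_i = min B'_i, and assume the indexing is chosen so that b_1 ≤ b_2 ≤ ⋯ ≤ b_k. Then 𝔅 = 𝔍, where 𝔍 = {I ⊆ P : B_i ⊆ I for some i ∈ {1,…,k}} and 𝔅 = 𝔅_1 ∪ ⋯ ∪ 𝔅_k with 𝔅_i = {I ⊆ P : B_i ⊆ I and B_j ∖ B'_i ⊄ I for every j < i}. -/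
open Finset

/-- over a linear order, with `B*_i = B'_i` (the strict upper bounds
of `B_i`, assumed nonempty) and the indexing ordered by `b_i = min B'_i`, the
ordering-free family `𝔅` coincides with the ordering-based family `𝔍`. -/
theorem stmt_8 {P : Type*} [Fintype P] [LinearOrder P]
    {k : ℕ} (B : Fin k → Finset P)
    (hne : ∀ i : Fin k,
      ((Finset.univ : Finset P).filter (fun p => ∀ b ∈ B i, b < p)).Nonempty)
    (hmono : ∀ i j : Fin k, i ≤ j →
      ((Finset.univ : Finset P).filter (fun p => ∀ b ∈ B i, b < p)).min' (hne i) ≤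
        ((Finset.univ : Finset P).filter (fun p => ∀ b ∈ B j, b < p)).min' (hne j)) :
    (Finset.univ : Finset P).powerset.filter
        (fun I => ∃ i : Fin k, B i ⊆ I ∧ ∀ j : Fin k, j < i →
          ¬ B j \ ((Finset.univ : Finset P).filter (fun p => ∀ b ∈ B i, b < p)) ⊆ I) =
      (Finset.univ : Finset P).powerset.filter (fun I => ∃ i : Fin k, B i ⊆ I) := by
  ext I
  simp only [mem_filter, mem_powerset]
  constructor
  · rintro ⟨hI, i, hBi, -⟩
    exact ⟨hI, i, hBi⟩
  · rintro ⟨hI, i₀, hBi₀⟩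
    refine ⟨hI, ?_⟩
    -- take the minimal index i with B i ⊆ I
    set S : Finset (Fin k) := Finset.univ.filter (fun i => B i ⊆ I) with hS
    have hSne : S.Nonempty := ⟨i₀, by simp [hS, hBi₀]⟩
    set i := S.min' hSne with hi
    have hiS : i ∈ S := S.min'_mem hSne
    have hBi : B i ⊆ I := (mem_filter.mp hiS).2
    refine ⟨i, hBi, fun j hj hcon => ?_⟩
    -- j < i, so ¬ B j ⊆ I
    have hjnot : ¬ B j ⊆ I := by
      intro h
      exact absurd (S.min'_le j (by simp [hS, h])) (not_le.mpr hj)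
    -- but B j ∩ B'_i = ∅, so B j \ B'_i = B j
    apply hjnot
    intro b hb
    apply hcon
    rw [mem_sdiff]
    refine ⟨hb, fun hbf => ?_⟩
    have h1 : ((Finset.univ : Finset P).filter (fun p => ∀ b ∈ B i, b < p)).min' (hne i) ≤ b :=
      min'_le _ _ hbf
    have h2 : b < ((Finset.univ : Finset P).filter (fun p => ∀ b ∈ B j, b < p)).min' (hne j) := by
      have hmem := ((Finset.univ : Finset P).filter
        (fun p => ∀ b ∈ B j, b < p)).min'_mem (hne j)
      rw [mem_filter] at hmem
      exact hmem.2 b hb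
    have h3 := hmono j i (le_of_lt hj)
    exact absurd h1 (not_le.mpr (h2.trans_le h3))
end

section
/- Let E be a finite set, M an additive commutative group, and f : 2^E → M a function. Let (B_1,b_1),…,(B_k,b_k) be pairs with B_i ⊆ E, b_i ∈ E ∖ B_i, such that f(F) = f(F ∪ {b_i}) for every i and every F ⊆ E with B_i ⊆ F. Then Σ_{F ⊆ E} (−1)^{|F|} f(F) = Σ_{F ∈ 2^E ∖ 𝔅} (−1)^{|F|} f(F), where 𝔅 = 𝔅_1 ∪ ⋯ ∪ 𝔅_k is built from the pairs (B_i, {b_i}). -/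
open Finset

/-- Corollary, abstract version for broken pairs: if
`f(F) = f(F ∪ {b_i})` for every `F ⊇ B_i`, then the signed sum of `f` over all
subsets of `E` equals the signed sum over `2^E \ 𝔅`. -/
theorem stmt_9 {E : Type*} [Fintype E] [DecidableEq E]
    {M : Type*} [AddCommGroup M] (f : Finset E → M)
    {k : ℕ} (B : Fin k → Finset E) (b : Fin k → E)
    (hb : ∀ i, b i ∉ B i)
    (hf : ∀ i : Fin k, ∀ F : Finset E, B i ⊆ F → f F = f (insert (b i) F)) :
    ∑ F ∈ (Finset.univ : Finset E).powerset, (-1 : ℤ) ^ F.card • f F =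
      ∑ F ∈ (Finset.univ : Finset E).powerset.filter
          (fun F => ¬ ∃ i : Fin k, B i ⊆ F ∧ ∀ j : Fin k, j < i → ¬ B j \ {b i} ⊆ F),
        (-1 : ℤ) ^ F.card • f F := by
  classical
  set C : Fin k → Finset E → Prop :=
    fun i F => B i ⊆ F ∧ ∀ j : Fin k, j < i → ¬ B j \ {b i} ⊆ F with hCdef
  -- the toggle map
  set tog : Fin k → Finset E → Finset E :=
    fun i F => if b i ∈ F then F.erase (b i) else insert (b i) F with htogdef
  have hmem_tog : ∀ i F x, x ≠ b i → (x ∈ tog i F ↔ x ∈ F) := by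
    intro i F x hx
    by_cases h : b i ∈ F <;> simp [htogdef, h, hx]
  have hsub_tog : ∀ i F (S : Finset E), b i ∉ S → (S ⊆ tog i F ↔ S ⊆ F) := by
    intro i F S hS
    constructor <;> intro h x hx
    · exact (hmem_tog i F x (fun he => hS (he ▸ hx))).1 (h hx)
    · exact (hmem_tog i F x (fun he => hS (he ▸ hx))).2 (h hx)
  have htogtog : ∀ i F, tog i (tog i F) = F := by
    intro i F
    by_cases h : b i ∈ F
    · simp [htogdef, h, Finset.insert_erase h]
    · simp [htogdef, h, Finset.erase_insert h]
  have hCtog : ∀ i F, C i F → C i (tog i F) := by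
    intro i F hCF
    refine ⟨(hsub_tog i F (B i) (hb i)).2 hCF.1, fun j hj hsub => ?_⟩
    exact hCF.2 j hj ((hsub_tog i F (B j \ {b i}) (by simp)).1 hsub)
  have hleast : ∀ (F : Finset E) (i : Fin k), C i F → ∀ j, j < i → ¬ C j (tog i F) := by
    intro F i hCF j hj hCj
    -- B j ⊆ tog i F, hence B j \ {b i} ⊆ F, contradicting hCF.2
    refine hCF.2 j hj (fun x hx => ?_)
    rcases Finset.mem_sdiff.1 hx with ⟨hxB, hxb⟩
    have hxb' : x ≠ b i := by simpa using hxb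
    exact (hmem_tog i F x hxb').1 (hCj.1 hxB)
  have key : ∑ F ∈ (Finset.univ : Finset E).powerset.filter (fun F => ∃ i : Fin k, C i F),
      (-1 : ℤ) ^ F.card • f F = 0 := by
    have hne : ∀ F, F ∈ (Finset.univ : Finset E).powerset.filter (fun F => ∃ i : Fin k, C i F) →
        ((Finset.univ : Finset (Fin k)).filter (fun i => C i F)).Nonempty := by
      intro F hF
      rcases (Finset.mem_filter.1 hF).2 with ⟨i, hi⟩
      exact ⟨i, Finset.mem_filter.2 ⟨Finset.mem_univ i, hi⟩⟩
    set idx : ∀ F, ((Finset.univ : Finset (Fin k)).filter (fun i => C i F)).Nonempty → Fin k :=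
      fun F h => ((Finset.univ : Finset (Fin k)).filter (fun i => C i F)).min' h with hidxdef
    have hidxC : ∀ F h, C (idx F h) F := by
      intro F h
      exact (Finset.mem_filter.1 (Finset.min'_mem _ h)).2
    have hidxmin : ∀ F h j, C j F → idx F h ≤ j := by
      intro F h j hj
      exact Finset.min'_le _ j (Finset.mem_filter.2 ⟨Finset.mem_univ j, hj⟩)
    refine Finset.sum_involution
      (fun F hF => tog (idx F (hne F hF)) F) ?_ ?_ ?_ ?_
    · -- sums to zero
      intro F hF
      set i := idx F (hne F hF) with hi
      have hCF : C i F := hidxC F (hne F hF)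
      have hfval : f (tog i F) = f F := by
        by_cases h : b i ∈ F
        · have h1 : B i ⊆ F.erase (b i) :=
            fun x hx => Finset.mem_erase.2 ⟨fun he => hb i (he ▸ hx), hCF.1 hx⟩
          have := hf i (F.erase (b i)) h1
          simp only [htogdef, h, if_pos]
          rw [this, Finset.insert_erase h]
        · simp only [htogdef, h, if_neg, not_false_iff]
          exact (hf i F hCF.1).symm
      have hcard : ((-1 : ℤ) ^ (tog i F).card) = -((-1 : ℤ) ^ F.card) := by
        by_cases h : b i ∈ F
        · have h1 : tog i F = F.erase (b i) := by simp only [htogdef, if_pos h]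
          have h2 : F.card = (F.erase (b i)).card + 1 := (Finset.card_erase_add_one h).symm
          rw [h1, h2, pow_succ]; ring
        · have h1 : tog i F = insert (b i) F := by simp only [htogdef, if_neg h]
          have h2 : (insert (b i) F).card = F.card + 1 := Finset.card_insert_of_notMem h
          rw [h1, h2, pow_succ]; ring
      rw [hfval, hcard, neg_smul, add_neg_cancel]
    · -- g ≠ id
      intro F hF _ hEq
      have hEq' : tog (idx F (hne F hF)) F = F := hEq
      set i := idx F (hne F hF)
      by_cases h : b i ∈ F
      · have : b i ∉ tog i F := by simp [htogdef, h]
        rw [hEq'] at this; exact this h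
      · have : b i ∈ tog i F := by simp [htogdef, h]
        rw [hEq'] at this; exact h this
    · -- g_mem
      intro F hF
      set i := idx F (hne F hF) with hi
      exact Finset.mem_filter.2 ⟨Finset.mem_powerset.2 (Finset.subset_univ _),
        ⟨i, hCtog i F (hidxC F (hne F hF))⟩⟩
    · -- involution
      intro F hF
      set i := idx F (hne F hF) with hi
      have hCF : C i F := hidxC F (hne F hF)
      have hmem' : tog i F ∈ (Finset.univ : Finset E).powerset.filter
          (fun F => ∃ i : Fin k, C i F) :=
        Finset.mem_filter.2 ⟨Finset.mem_powerset.2 (Finset.subset_univ _),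
          ⟨i, hCtog i F hCF⟩⟩
      have hidx' : idx (tog i F) (hne _ hmem') = i := by
        refine le_antisymm (hidxmin _ _ i (hCtog i F hCF)) ?_
        by_contra hlt
        push_neg at hlt
        exact hleast F i hCF _ hlt (hidxC (tog i F) (hne _ hmem'))
      rw [show idx (tog i F) _ = i from hidx', htogtog]
  have split := Finset.sum_filter_add_sum_filter_not
    ((Finset.univ : Finset E).powerset)
    (fun F => ∃ i : Fin k, C i F)
    (fun F => (-1 : ℤ) ^ F.card • f F)
  rw [← split, key, zero_add]
end

section
/- Let G be a finite simple graph on n vertices and let (B_1,b_1),…,(B_k,b_k) be pairs with B_i ⊆ V(G), b_i ∈ V(G) ∖ B_i, and N[b_i] ⊆ N[B_i] for every i. Then, in the polynomial ring ℝ[x], Σ_{W ⊆ V(G)} (−1)^{|W|} (1+x)^{n−|N[W]|} = Σ_{W ∈ 2^{V(G)} ∖ 𝔅} (−1)^{|W|} (1+x)^{n−|N[W]|}, where 𝔅 = 𝔅_1 ∪ ⋯ ∪ 𝔅_k is built from the pairs (B_i, {b_i}). -/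
open Finset Polynomial

/-- The closed neighbourhood of a set of vertices `W`:
`N[W] = W ∪ {v : v is adjacent to some vertex of W}`. -/
def closedNbhd {V : Type*} [Fintype V] [DecidableEq V]
    (G : SimpleGraph V) [DecidableRel G.Adj] (W : Finset V) : Finset V :=
  W ∪ (Finset.univ : Finset V).filter (fun v => ∃ w ∈ W, G.Adj w v)

lemma closedNbhd_mono {V : Type*} [Fintype V] [DecidableEq V]
    (G : SimpleGraph V) [DecidableRel G.Adj] {W W' : Finset V} (h : W ⊆ W') :
    closedNbhd G W ⊆ closedNbhd G W' := by
  intro v hv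
  simp only [closedNbhd, mem_union, mem_filter, mem_univ, true_and] at hv ⊢
  rcases hv with h1 | ⟨w, hw, ha⟩
  · exact Or.inl (h h1)
  · exact Or.inr ⟨w, h hw, ha⟩

lemma closedNbhd_insert {V : Type*} [Fintype V] [DecidableEq V]
    (G : SimpleGraph V) [DecidableRel G.Adj] (x : V) (W : Finset V) :
    closedNbhd G (insert x W) = closedNbhd G {x} ∪ closedNbhd G W := by
  ext v
  simp only [closedNbhd, mem_union, mem_filter, mem_univ, true_and, mem_insert,
    mem_singleton]
  constructor
  · rintro (h | ⟨w, (rfl | hw), ha⟩)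
    · rcases h with rfl | h
      · exact Or.inl (Or.inl rfl)
      · exact Or.inr (Or.inl h)
    · exact Or.inl (Or.inr ⟨w, rfl, ha⟩)
    · exact Or.inr (Or.inr ⟨w, hw, ha⟩)
  · rintro ((rfl | ⟨w, rfl, ha⟩) | (h | ⟨w, hw, ha⟩))
    · exact Or.inl (Or.inl rfl)
    · exact Or.inr ⟨w, Or.inl rfl, ha⟩
    · exact Or.inl (Or.inr h)
    · exact Or.inr ⟨w, Or.inr hw, ha⟩

/-- domination polynomial: broken pairs `(B_i, b_i)` with
`N[b_i] ⊆ N[B_i]` allow restricting the inclusion-exclusion sum for the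
domination polynomial to `2^{V(G)} \ 𝔅`. -/
theorem stmt_12 {V : Type*} [Fintype V] [DecidableEq V]
    (G : SimpleGraph V) [DecidableRel G.Adj]
    {k : ℕ} (B : Fin k → Finset V) (b : Fin k → V)
    (hb : ∀ i, b i ∉ B i)
    (hN : ∀ i, closedNbhd G {b i} ⊆ closedNbhd G (B i)) :
    ∑ W ∈ (Finset.univ : Finset V).powerset,
        (-1 : Polynomial ℝ) ^ W.card *
          (1 + Polynomial.X) ^ (Fintype.card V - (closedNbhd G W).card) =
      ∑ W ∈ (Finset.univ : Finset V).powerset.filter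
          (fun W => ¬ ∃ i : Fin k, B i ⊆ W ∧ ∀ j : Fin k, j < i → ¬ B j \ {b i} ⊆ W),
        (-1 : Polynomial ℝ) ^ W.card *
          (1 + Polynomial.X) ^ (Fintype.card V - (closedNbhd G W).card) := by
  classical
  set F : Finset V → Polynomial ℝ := fun W =>
    (-1 : Polynomial ℝ) ^ W.card *
      (1 + Polynomial.X) ^ (Fintype.card V - (closedNbhd G W).card) with hF
  set p : Finset V → Prop := fun W =>
    ∃ i : Fin k, B i ⊆ W ∧ ∀ j : Fin k, j < i → ¬ B j \ {b i} ⊆ W with hp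
  have hsplit := Finset.sum_filter_add_sum_filter_not
    ((Finset.univ : Finset V).powerset) p F
  have hzero : ∑ W ∈ (Finset.univ : Finset V).powerset.filter p, F W = 0 := by
    -- the witness set for W
    set S : Finset V → Finset (Fin k) := fun W =>
      Finset.univ.filter (fun i => B i ⊆ W ∧ ∀ j : Fin k, j < i → ¬ B j \ {b i} ⊆ W)
      with hS
    have hSne : ∀ W ∈ (Finset.univ : Finset V).powerset.filter p, (S W).Nonempty := by
      intro W hW
      rw [mem_filter] at hW
      obtain ⟨i, hi⟩ := hW.2
      exact ⟨i, Finset.mem_filter.2 ⟨Finset.mem_univ _, hi⟩⟩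
    -- the toggle operation
    set t : Finset V → V → Finset V := fun W x =>
      if x ∈ W then W.erase x else insert x W with ht
    have ht_ne : ∀ W x, t W x ≠ W := by
      intro W x h
      by_cases hx : x ∈ W
      · simp only [ht, if_pos hx] at h
        exact Finset.erase_ne_self.2 hx h
      · simp only [ht, if_neg hx] at h
        exact hx (h ▸ Finset.mem_insert_self x W)
    have ht_inv : ∀ W x, t (t W x) x = W := by
      intro W x
      by_cases hx : x ∈ W
      · simp [ht, hx, Finset.insert_erase hx]
      · simp [ht, hx, Finset.erase_insert hx]
    have ht_sub : ∀ {W x} {A : Finset V}, x ∉ A → A ⊆ t W x → A ⊆ W := by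
      intro W x A hxA hAW
      intro a ha
      have := hAW ha
      by_cases hx : x ∈ W <;> simp [ht, hx] at this
      · exact this.2
      · rcases this with rfl | h
        · exact absurd ha hxA
        · exact h
    have ht_sub' : ∀ {W x} {A : Finset V}, x ∉ A → A ⊆ W → A ⊆ t W x := by
      intro W x A hxA hAW a ha
      by_cases hx : x ∈ W <;> simp [ht, hx]
      · exact ⟨fun he => hxA (he ▸ ha), hAW ha⟩
      · exact Or.inr (hAW ha)
    -- closed neighbourhood is preserved
    have htN : ∀ (i : Fin k) (W : Finset V), B i ⊆ W →
        closedNbhd G (t W (b i)) = closedNbhd G W := by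
      intro i W hBW
      by_cases hx : b i ∈ W
      · have hBe : B i ⊆ W.erase (b i) :=
          Finset.subset_erase.2 ⟨hBW, hb i⟩
        have hW : W = insert (b i) (W.erase (b i)) := (Finset.insert_erase hx).symm
        simp only [ht, if_pos hx]
        conv_rhs => rw [hW]
        rw [closedNbhd_insert]
        exact (Finset.union_eq_right.2
          ((hN i).trans (closedNbhd_mono G hBe))).symm ▸ rfl
      · simp only [ht, if_neg hx]
        rw [closedNbhd_insert]
        exact Finset.union_eq_right.2 ((hN i).trans (closedNbhd_mono G hBW))
    -- parity flips
    have htF : ∀ (i : Fin k) (W : Finset V), B i ⊆ W →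
        F W + F (t W (b i)) = 0 := by
      intro i W hBW
      have hNb := htN i W hBW
      by_cases hx : b i ∈ W
      · have hc : W.card = (t W (b i)).card + 1 := by
          simp only [ht, if_pos hx]
          exact (Finset.card_erase_add_one hx).symm
        simp only [hF, hNb, hc, pow_succ]
        ring
      · have hc : (t W (b i)).card = W.card + 1 := by
          simp only [ht, if_neg hx]
          exact Finset.card_insert_of_notMem hx
        simp only [hF, hNb, hc, pow_succ]
        ring
    -- the involution
    refine Finset.sum_involution
      (fun W hW => t W (b ((S W).min' (hSne W hW)))) ?_ ?_ ?_ ?_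
    · intro W hW
      have him : (S W).min' (hSne W hW) ∈ S W := Finset.min'_mem _ _
      have him2 := (Finset.mem_filter.1 him).2
      exact htF _ W him2.1
    · intro W hW _
      exact ht_ne W _
    · intro W hW
      have him : (S W).min' (hSne W hW) ∈ S W := Finset.min'_mem _ _
      have him2 := (Finset.mem_filter.1 him).2
      set i := (S W).min' (hSne W hW)
      refine Finset.mem_filter.2
        ⟨Finset.mem_powerset.2 (Finset.subset_univ _), ⟨i, ?_, ?_⟩⟩
      · exact ht_sub' (hb i) him2.1
      · intro j hj hcon
        exact him2.2 j hj (ht_sub (by simp) hcon)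
    · intro W hW
      -- key: the minimal witness for t W (b i) is again i
      set i := (S W).min' (hSne W hW) with hi
      have him : i ∈ S W := Finset.min'_mem _ _
      have him2 := (Finset.mem_filter.1 him).2
      set W' := t W (b i) with hW'
      have hmem' : W' ∈ (Finset.univ : Finset V).powerset.filter p := by
        rw [Finset.mem_filter]
        refine ⟨Finset.mem_powerset.2 (Finset.subset_univ _), ⟨i, ?_, ?_⟩⟩
        · exact ht_sub' (hb i) him2.1
        · intro j hj hcon
          exact him2.2 j hj (ht_sub (by simp) hcon)
      have hieq : (S W').min' (hSne W' hmem') = i := by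
        apply le_antisymm
        · apply Finset.min'_le
          refine Finset.mem_filter.2 ⟨Finset.mem_univ _, ht_sub' (hb i) him2.1, ?_⟩
          intro j hj hcon
          exact him2.2 j hj (ht_sub (by simp) hcon)
        · -- any witness i' of W' satisfies i ≤ i'
          have him' : (S W').min' (hSne W' hmem') ∈ S W' := Finset.min'_mem _ _
          have him2' := (Finset.mem_filter.1 him').2
          by_contra hlt
          push_neg at hlt
          -- i' < i, B i' ⊆ W' ⊆ W ∪ {b i}, so B i' \ {b i} ⊆ W
          refine him2.2 _ hlt ?_
          intro a ha
          rw [Finset.mem_sdiff, Finset.mem_singleton] at ha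
          have haW' : a ∈ W' := him2'.1 ha.1
          by_cases hx : b i ∈ W <;> simp [hW', ht, hx] at haW'
          · exact haW'.2
          · rcases haW' with rfl | h
            · exact absurd rfl ha.2
            · exact h
      -- now conclude
      show t W' (b ((S W').min' (hSne W' hmem'))) = W
      rw [hieq]
      exact ht_inv W (b i)
  rw [← hsplit, hzero, zero_add]
end

section
/- Let G be a finite simple graph on n vertices and let (B_1,b_1),…,(B_k,b_k) be pairs with B_i ⊆ E(G), b_i ∈ E(G) ∖ B_i, such that every vertex incident to the edge b_i is incident to some edge of B_i, for each i. Then, in the polynomial ring ℝ[x], Σ_{F ⊆ E(G)} (−1)^{|F|} x^{|V(F)|} (1+x)^{n−|V(F)|} = Σ_{F ∈ 2^{E(G)} ∖ 𝔅} (−1)^{|F|} x^{|V(F)|} (1+x)^{n−|V(F)|}, where |V(F)| denotes the number of vertices incident to some edge of F and 𝔅 = 𝔅_1 ∪ ⋯ ∪ 𝔅_k is built from the pairs (B_i, {b_i}). -/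
/-!
The families `𝔅_i` are pairwise disjoint: if `F ∈ 𝔅_i ∩ 𝔅_j` with `j < i`, then `B_j ⊆ F`
contradicts `B_j \ {b_i} ⊄ F`. Each `𝔅_i` is closed under toggling the edge `b_i`, since `b_i`
lies neither in `B_i` nor in any `B_j \ {b_i}`. Toggling `b_i` flips the sign `(-1)^|F|` but,
as the vertices of `b_i` are covered by `B_i ⊆ F`, leaves `V(F)` unchanged. So the terms over
each `𝔅_i` cancel in pairs and the sum over `𝔅` vanishes.
-/

open Finset Polynomial

/-- The set of vertices incident to at least one edge of `F`. -/
def edgeVerts {V : Type*} [Fintype V] [DecidableEq V] (F : Finset (Sym2 V)) : Finset V :=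
  (Finset.univ : Finset V).filter (fun v => ∃ e ∈ F, v ∈ e)

open scoped symmDiff

namespace Finset

variable {α : Type*} [DecidableEq α] {a : α} {s F : Finset α}

lemma symmDiff_singleton_of_mem (h : a ∈ F) : F ∆ {a} = F.erase a := by
  ext x
  by_cases hx : x = a <;> simp [mem_symmDiff, hx, h]

lemma symmDiff_singleton_of_notMem (h : a ∉ F) : F ∆ {a} = insert a F := by
  ext x
  by_cases hx : x = a <;> simp [mem_symmDiff, hx, h]

lemma erase_symmDiff_singleton : (F ∆ {a}).erase a = F.erase a := by
  ext x
  by_cases hx : x = a <;> simp [mem_symmDiff, hx]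

lemma subset_symmDiff_singleton_iff (ha : a ∉ s) : s ⊆ F ∆ {a} ↔ s ⊆ F := by
  refine forall₂_congr fun x hx => ?_
  have hxa : x ≠ a := ne_of_mem_of_not_mem hx ha
  simp [mem_symmDiff, hxa]

lemma neg_one_pow_card_symmDiff_singleton {R : Type*} [Ring R] :
    (-1 : R) ^ #(F ∆ {a}) = -(-1) ^ #F := by
  by_cases h : a ∈ F
  · rw [symmDiff_singleton_of_mem h, ← card_erase_add_one h, pow_succ, mul_neg_one, neg_neg]
  · rw [symmDiff_singleton_of_notMem h, card_insert_of_notMem h, pow_succ, mul_neg_one]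

lemma sum_eq_zero_of_symmDiff_singleton {M : Type*} [AddCommGroup M]
    (S : Finset (Finset α)) (f : Finset α → M)
    (hS : ∀ F ∈ S, F ∆ {a} ∈ S) (hf : ∀ F ∈ S, f (F ∆ {a}) = -f F) :
    ∑ F ∈ S, f F = 0 := by
  refine sum_involution (fun F _ => F ∆ {a}) (fun F hF => by rw [hf F hF, add_neg_cancel])
    (fun F _ _ hF => ?_) hS (fun F _ => symmDiff_symmDiff_cancel_right _ _)
  have := congrArg (a ∈ ·) hF
  simp [mem_symmDiff] at this

end Finset

section EdgeVerts

variable {V : Type*} [Fintype V] [DecidableEq V] {s F : Finset (Sym2 V)} {a : Sym2 V}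

lemma edgeVerts_insert_of_forall_mem (h : ∀ v ∈ a, ∃ e ∈ F, v ∈ e) :
    edgeVerts (insert a F) = edgeVerts F := by
  ext v
  simp only [edgeVerts, mem_filter, mem_univ, true_and, exists_mem_insert]
  exact ⟨fun hv => hv.elim (h v) id, Or.inr⟩

lemma edgeVerts_erase_of_forall_mem (h : ∀ v ∈ a, ∃ e ∈ F.erase a, v ∈ e) :
    edgeVerts (F.erase a) = edgeVerts F := by
  by_cases ha : a ∈ F
  · conv_rhs => rw [← insert_erase ha]
    exact (edgeVerts_insert_of_forall_mem h).symm
  · rw [erase_eq_of_notMem ha]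

lemma edgeVerts_symmDiff_singleton (hs : s ⊆ F) (ha : a ∉ s) (h : ∀ v ∈ a, ∃ e ∈ s, v ∈ e) :
    edgeVerts (F ∆ {a}) = edgeVerts F := by
  have hs' : s ⊆ F.erase a := fun e he => mem_erase.2 ⟨ne_of_mem_of_not_mem he ha, hs he⟩
  have hcov : ∀ v ∈ a, ∃ e ∈ F.erase a, v ∈ e := fun v hv =>
    (h v hv).imp fun e he => ⟨hs' he.1, he.2⟩
  rw [← edgeVerts_erase_of_forall_mem (F := F ∆ {a}) (by rwa [erase_symmDiff_singleton]),
    erase_symmDiff_singleton, edgeVerts_erase_of_forall_mem hcov]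

end EdgeVerts

section Broken

variable {α : Type*} [DecidableEq α] {k : ℕ} (B : Fin k → Finset α) (b : Fin k → α)

/-- `IsBrokenAt B b i F` says `F ∈ 𝔅_i`. -/
abbrev IsBrokenAt (i : Fin k) (F : Finset α) : Prop :=
  B i ⊆ F ∧ ∀ j : Fin k, j < i → ¬ B j \ {b i} ⊆ F

variable {B b}

lemma isBrokenAt_symmDiff_singleton_iff {i : Fin k} {F : Finset α} (hb : b i ∉ B i) :
    IsBrokenAt B b i (F ∆ {b i}) ↔ IsBrokenAt B b i F := by
  have hsdiff : ∀ j, b i ∉ B j \ {b i} := fun j => by simp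
  simp only [IsBrokenAt, subset_symmDiff_singleton_iff hb, subset_symmDiff_singleton_iff (hsdiff _)]

lemma IsBrokenAt.eq {i j : Fin k} {F : Finset α} (hi : IsBrokenAt B b i F)
    (hj : IsBrokenAt B b j F) : i = j := by
  rcases lt_trichotomy i j with hij | hij | hij
  · exact absurd (sdiff_subset.trans hi.1) (hj.2 i hij)
  · exact hij
  · exact absurd (sdiff_subset.trans hj.1) (hi.2 j hij)

variable {M : Type*} [AddCommGroup M] {E : Finset α} {f : Finset α → M}

lemma sum_filter_isBrokenAt_eq_zero {i : Fin k} (hbE : b i ∈ E) (hb : b i ∉ B i)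
    (hf : ∀ F, B i ⊆ F → f (F ∆ {b i}) = -f F) :
    ∑ F ∈ E.powerset.filter (IsBrokenAt B b i), f F = 0 := by
  refine sum_eq_zero_of_symmDiff_singleton _ _ (fun F hF => ?_) (fun F hF => hf F ?_)
  · obtain ⟨hFE, hF⟩ := mem_filter.1 hF
    refine mem_filter.2 ⟨mem_powerset.2 fun e he => ?_, (isBrokenAt_symmDiff_singleton_iff hb).2 hF⟩
    rcases mem_symmDiff.1 he with ⟨he, -⟩ | ⟨he, -⟩
    · exact mem_powerset.1 hFE he
    · exact mem_singleton.1 he ▸ hbE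
  · exact (mem_filter.1 hF).2.1

lemma sum_filter_exists_isBrokenAt_eq_zero (hbE : ∀ i, b i ∈ E) (hb : ∀ i, b i ∉ B i)
    (hf : ∀ i F, B i ⊆ F → f (F ∆ {b i}) = -f F) :
    ∑ F ∈ E.powerset.filter (fun F => ∃ i, IsBrokenAt B b i F), f F = 0 := by
  have hunion : E.powerset.filter (fun F => ∃ i, IsBrokenAt B b i F) =
      univ.biUnion fun i => E.powerset.filter (IsBrokenAt B b i) := by
    ext F
    simp
  have hdisj : Set.PairwiseDisjoint ↑(univ : Finset (Fin k))
      fun i => E.powerset.filter (IsBrokenAt B b i) := fun i _ j _ hij =>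
    disjoint_filter.2 fun _ _ hi hj => hij (hi.eq hj)
  rw [hunion, sum_biUnion hdisj]
  exact sum_eq_zero fun i _ => sum_filter_isBrokenAt_eq_zero (hbE i) (hb i) (hf i)

end Broken

theorem stmt_13_general {V : Type*} [Fintype V] [DecidableEq V]
    (G : SimpleGraph V) [DecidableRel G.Adj]
    {k : ℕ} (B : Fin k → Finset (Sym2 V)) (b : Fin k → Sym2 V)
    (hbE : ∀ i, b i ∈ G.edgeFinset)
    (hb : ∀ i, b i ∉ B i)
    (hcov : ∀ i : Fin k, ∀ v : V, v ∈ b i → ∃ e ∈ B i, v ∈ e) :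
    ∑ F ∈ G.edgeFinset.powerset,
        (-1 : Polynomial ℝ) ^ F.card * Polynomial.X ^ (edgeVerts F).card *
          (1 + Polynomial.X) ^ (Fintype.card V - (edgeVerts F).card) =
      ∑ F ∈ G.edgeFinset.powerset.filter
          (fun F => ¬ ∃ i : Fin k, B i ⊆ F ∧ ∀ j : Fin k, j < i → ¬ B j \ {b i} ⊆ F),
        (-1 : Polynomial ℝ) ^ F.card * Polynomial.X ^ (edgeVerts F).card *
          (1 + Polynomial.X) ^ (Fintype.card V - (edgeVerts F).card) := by
  rw [← sum_filter_add_sum_filter_not _ (fun F => ∃ i, IsBrokenAt B b i F),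
    sum_filter_exists_isBrokenAt_eq_zero hbE hb, zero_add]
  intro i F hBF
  rw [edgeVerts_symmDiff_singleton hBF (hb i) (hcov i), neg_one_pow_card_symmDiff_singleton]
  ring

/-- independence polynomial: broken pairs `(B_i, b_i)` of edges,
where every vertex of `b_i` is covered by `B_i`, allow restricting the
inclusion-exclusion sum for the independence polynomial to `2^{E(G)} \ 𝔅`. -/
theorem stmt_13 {V : Type*} [Fintype V] [DecidableEq V]
    (G : SimpleGraph V) [DecidableRel G.Adj]
    {k : ℕ} (B : Fin k → Finset (Sym2 V)) (b : Fin k → Sym2 V)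
    (hBE : ∀ i, B i ⊆ G.edgeFinset) (hbE : ∀ i, b i ∈ G.edgeFinset)
    (hb : ∀ i, b i ∉ B i)
    (hcov : ∀ i : Fin k, ∀ v : V, v ∈ b i → ∃ e ∈ B i, v ∈ e) :
    ∑ F ∈ G.edgeFinset.powerset,
        (-1 : Polynomial ℝ) ^ F.card * Polynomial.X ^ (edgeVerts F).card *
          (1 + Polynomial.X) ^ (Fintype.card V - (edgeVerts F).card) =
      ∑ F ∈ G.edgeFinset.powerset.filter
          (fun F => ¬ ∃ i : Fin k, B i ⊆ F ∧ ∀ j : Fin k, j < i → ¬ B j \ {b i} ⊆ F),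
        (-1 : Polynomial ℝ) ^ F.card * Polynomial.X ^ (edgeVerts F).card *
          (1 + Polynomial.X) ^ (Fintype.card V - (edgeVerts F).card) :=
  stmt_13_general G B b hbE hb hcov
end
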